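/- (Nearest-center property of the truncated octahedron) Let ℓ > 0, let c ∈ L_ℓ, and let ξ ∈ T(c). Then for every c' ∈ L_ℓ with c' ≠ c, one has |ξ − c| < |ξ − c'|, where |·| is the Euclidean norm on ℝ³. -/

import Mathlib

/-!
Write `x = ξ - c` and `a = c' - c`. Then `‖ξ - c‖ < ‖ξ - c'‖` says `∑ᵢ (2 xᵢ aᵢ - aᵢ²) < 0`,
and the elementary bound `2 x a - a² ≤ 2 r |x| - r²` for `|x| ≤ r ≤ |a|` controls each term.
The difference of two points of the body-centred cubic lattice is either in `ℓ ℤ³`, where every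
nonzero coordinate has `|aᵢ| ≥ ℓ > 2 |xᵢ|` and the cube constraint suffices, or has all coordinates
odd multiples of `ℓ / 2`, where the terms sum to at most `ℓ ∑ |xᵢ| - 3 ℓ² / 4 < 0` by the
octahedral constraint.
-/

noncomputable section

abbrev V3 := EuclideanSpace ℝ (Fin 3)

/-- The body-centered cubic lattice L_ℓ = {ℓn : n ∈ ℤ³} ∪ {ℓn + (ℓ/2,ℓ/2,ℓ/2) : n ∈ ℤ³}. -/
def latt (ℓ : ℝ) : Set V3 :=
  {c | ∃ n : Fin 3 → ℤ, (∀ i, c i = ℓ * n i) ∨ (∀ i, c i = ℓ * n i + ℓ / 2)}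

/-- The open truncated-octahedron cell with center c and parameter ℓ. -/
def Tcell (ℓ : ℝ) (c : V3) : Set V3 :=
  {ξ | (∀ i, |ξ i - c i| < ℓ / 2) ∧
    |ξ 0 - c 0| + |ξ 1 - c 1| + |ξ 2 - c 2| < (3 / 4) * ℓ}

open Finset

theorem two_mul_mul_sub_sq_le {x a r : ℝ} (hx : |x| ≤ r) (ha : r ≤ |a|) :
    2 * x * a - a ^ 2 ≤ 2 * r * |x| - r ^ 2 := by
  have hxa : x * a ≤ |x| * |a| := (le_abs_self _).trans_eq (abs_mul x a)
  nlinarith [sq_abs a, mul_nonneg (sub_nonneg.2 ha) (sub_nonneg.2 (hx.trans ha))]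

theorem EuclideanSpace.norm_lt_norm_sub_iff {ι : Type*} [Fintype ι] (x a : EuclideanSpace ℝ ι) :
    ‖x‖ < ‖x - a‖ ↔ ∑ i, (2 * x i * a i - a i ^ 2) < 0 := by
  have hsum : 2 * inner ℝ x a - ‖a‖ ^ 2 = ∑ i, (2 * x i * a i - a i ^ 2) := by
    simp only [PiLp.inner_apply, EuclideanSpace.real_norm_sq_eq, sum_sub_distrib, mul_sum,
      RCLike.inner_apply, conj_trivial]
    exact congrArg (· - _) (sum_congr rfl fun i _ => by ring)
  rw [← hsum, ← sq_lt_sq₀ (norm_nonneg _) (norm_nonneg _), norm_sub_sq_real]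
  constructor <;> intro h <;> linarith

theorem sum_two_mul_mul_sub_sq_neg_of_eq_zero_or_le_abs {ι : Type*} [Fintype ι] {ℓ : ℝ}
    {x a : ι → ℝ} (hx : ∀ i, |x i| < ℓ / 2) (ha : ∀ i, a i = 0 ∨ ℓ ≤ |a i|) (hne : a ≠ 0) :
    ∑ i, (2 * x i * a i - a i ^ 2) < 0 := by
  have hneg : ∀ i, a i ≠ 0 → 2 * x i * a i - a i ^ 2 < 0 := fun i hi => by
    have hxℓ : |x i| ≤ ℓ := by linarith [hx i, abs_nonneg (x i)]
    nlinarith [two_mul_mul_sub_sq_le hxℓ ((ha i).resolve_left hi), hx i, abs_nonneg (x i)]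
  obtain ⟨j, hj⟩ := Function.ne_iff.1 hne
  refine sum_neg' (fun i _ => ?_) ⟨j, mem_univ j, hneg j hj⟩
  by_cases hi : a i = 0
  · simp [hi]
  · exact (hneg i hi).le

theorem sum_two_mul_mul_sub_sq_neg_of_half_le_abs {ι : Type*} [Fintype ι] {ℓ : ℝ}
    {x a : ι → ℝ} (hx : ∀ i, |x i| ≤ ℓ / 2) (hsum : ∑ i, |x i| < Fintype.card ι * ℓ / 4)
    (ha : ∀ i, ℓ / 2 ≤ |a i|) :
    ∑ i, (2 * x i * a i - a i ^ 2) < 0 := by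
  have hℓ : 0 < ℓ := by
    have := sum_nonneg fun i (_ : i ∈ univ) => abs_nonneg (x i)
    by_contra! h
    nlinarith [(Fintype.card ι).cast_nonneg (α := ℝ)]
  calc ∑ i, (2 * x i * a i - a i ^ 2)
      ≤ ∑ i, (ℓ * |x i| - ℓ ^ 2 / 4) :=
        sum_le_sum fun i _ => (two_mul_mul_sub_sq_le (hx i) (ha i)).trans_eq (by ring)
    _ = ℓ * (∑ i, |x i| - Fintype.card ι * ℓ / 4) := by
        rw [sum_sub_distrib, ← mul_sum, sum_const, card_univ, nsmul_eq_mul]; ring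
    _ < 0 := mul_neg_of_pos_of_neg hℓ (by linarith)

theorem le_abs_mul_intCast (r : ℝ) {k : ℤ} (hk : k ≠ 0) : r ≤ |r * k| := by
  have hk1 : (1 : ℝ) ≤ |(k : ℝ)| := by exact_mod_cast Int.one_le_abs hk
  rw [abs_mul]
  nlinarith [le_abs_self r, abs_nonneg r]

theorem sub_cases_of_mem_latt {ℓ : ℝ} {c c' : V3} (hc : c ∈ latt ℓ) (hc' : c' ∈ latt ℓ) :
    (∀ i, c' i - c i = 0 ∨ ℓ ≤ |c' i - c i|) ∨ ∀ i, ℓ / 2 ≤ |c' i - c i| := by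
  have same : ∀ k : Fin 3 → ℤ, (∀ i, c' i - c i = ℓ * k i) →
      ∀ i, c' i - c i = 0 ∨ ℓ ≤ |c' i - c i| := fun k hk i => by
    rw [hk i]
    rcases eq_or_ne (k i) 0 with h | h
    · simp [h]
    · exact .inr (le_abs_mul_intCast ℓ h)
  have mixed : ∀ k : Fin 3 → ℤ, (∀ i, c' i - c i = ℓ / 2 * (2 * k i + 1 : ℤ)) →
      ∀ i, ℓ / 2 ≤ |c' i - c i| := fun k hk i => by
    rw [hk i]
    exact le_abs_mul_intCast _ (by omega)
  obtain ⟨n, hn | hn⟩ := hc <;> obtain ⟨m, hm | hm⟩ := hc'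
  · exact .inl (same (fun i => m i - n i) fun i => by rw [hn, hm]; push_cast; ring)
  · exact .inr (mixed (fun i => m i - n i) fun i => by rw [hn, hm]; push_cast; ring)
  · exact .inr (mixed (fun i => m i - n i - 1) fun i => by rw [hn, hm]; push_cast; ring)
  · exact .inl (same (fun i => m i - n i) fun i => by rw [hn, hm]; push_cast; ring)

theorem truncated_octahedron_nearest_center_general
    (ℓ : ℝ) (c : V3) (hc : c ∈ latt ℓ) (ξ : V3) (hξ : ξ ∈ Tcell ℓ c)
    (c' : V3) (hc' : c' ∈ latt ℓ) (hne : c' ≠ c) :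
    ‖ξ - c‖ < ‖ξ - c'‖ := by
  obtain ⟨hbox, hoct⟩ := hξ
  rw [show ξ - c' = (ξ - c) - (c' - c) by abel, EuclideanSpace.norm_lt_norm_sub_iff]
  simp only [PiLp.sub_apply]
  rcases sub_cases_of_mem_latt hc hc' with hd | hd
  · refine sum_two_mul_mul_sub_sq_neg_of_eq_zero_or_le_abs hbox hd fun h => hne ?_
    ext i
    simpa [sub_eq_zero] using congrFun h i
  · refine sum_two_mul_mul_sub_sq_neg_of_half_le_abs (fun i => (hbox i).le) ?_ hd
    rw [Fin.sum_univ_three, Fintype.card_fin]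
    linarith

/-- **Nearest-center property of the truncated octahedron.** If ξ lies in the open cell
with center c ∈ L_ℓ, then c is strictly the nearest lattice point to ξ. -/
theorem truncated_octahedron_nearest_center
    (ℓ : ℝ) (hℓ : 0 < ℓ) (c : V3) (hc : c ∈ latt ℓ) (ξ : V3) (hξ : ξ ∈ Tcell ℓ c)
    (c' : V3) (hc' : c' ∈ latt ℓ) (hne : c' ≠ c) :
    ‖ξ - c‖ < ‖ξ - c'‖ :=
  truncated_octahedron_nearest_center_general ℓ c hc ξ hξ c' hc' hne
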